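/- arXiv:2006.04409 — 7 statements merged into one kernel-verified Lean document; each statement's English description precedes it below -/
import Mathlib

section
/- Let W be a nonempty finite set of positive integers, each at most m, and let w = gcd(W). Then there exists a subset W' ⊆ W with |W'|! ≤ m/w such that gcd(W') = gcd(W). In particular, |W'| < log₂(m/w) + 2. -/
lemma exists_big (T : Finset ℕ) (hT : T.Nonempty) (h2 : ∀ x ∈ T, 2 ≤ x) :
    ∃ x ∈ T, T.card + 1 ≤ x := by
  by_contra h
  push_neg at h
  have hsub : T ⊆ Finset.Icc 2 T.card := by
    intro x hx
    exact Finset.mem_Icc.2 ⟨h2 x hx, Nat.lt_succ_iff.1 (h x hx)⟩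
  have hc := Finset.card_le_card hsub
  rw [Nat.card_Icc] at hc
  have := Finset.card_pos.2 hT
  omega

lemma key (m : ℕ) : ∀ n (S : Finset ℕ), S.card = n → S.Nonempty →
    (∀ x ∈ S, 0 < x) → (∀ x ∈ S, x ≤ m) →
    (∀ R ⊆ S, R.Nonempty → R ≠ S → S.gcd id < R.gcd id) →
    S.gcd id * n.factorial ≤ m := by
  intro n
  induction n using Nat.strong_induction_on with
  | _ n ih =>
    intro S hcard hne hpos hle hmin
    have hwpos : 0 < S.gcd id := by
      obtain ⟨a, ha⟩ := hne
      exact Nat.pos_of_dvd_of_pos (Finset.gcd_dvd ha) (hpos a ha)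
    match n, hcard with
    | 0, hcard =>
      rw [Finset.card_eq_zero] at hcard; subst hcard; exact absurd hne (by simp)
    | 1, hcard =>
      obtain ⟨a, rfl⟩ := Finset.card_eq_one.1 hcard
      simpa using hle a (by simp)
    | (k+2), hcard =>
      set w := S.gcd id with hw
      set d : ℕ → ℕ := fun a => (S.erase a).gcd id with hd
      have herase_ne : ∀ a ∈ S, (S.erase a).Nonempty := by
        intro a ha
        rw [← Finset.card_pos, Finset.card_erase_of_mem ha, hcard]; omega
      have hdvd_w : ∀ a ∈ S, w ∣ d a := by
        intro a ha
        exact Finset.dvd_gcd fun x hx => Finset.gcd_dvd (Finset.mem_of_mem_erase hx)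
      have hd_gt : ∀ a ∈ S, w < d a := by
        intro a ha
        exact hmin _ (Finset.erase_subset a S) (herase_ne a ha)
          (fun h => absurd ha (by rw [← h]; exact Finset.notMem_erase a S))
      have hinj : ∀ a ∈ S, ∀ b ∈ S, d a = d b → a = b := by
        intro a ha b hb hab
        by_contra hne'
        have hdall : ∀ x ∈ S, d a ∣ x := by
          intro x hx
          rcases eq_or_ne x a with rfl | hxa
          · rw [hab]; exact Finset.gcd_dvd (Finset.mem_erase.2 ⟨hne', hx⟩)
          · exact Finset.gcd_dvd (Finset.mem_erase.2 ⟨hxa, hx⟩)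
        have hdw : d a ∣ w := Finset.dvd_gcd fun x hx => hdall x hx
        have := Nat.le_of_dvd hwpos hdw
        have := hd_gt a ha
        omega
      have hdivq : ∀ a ∈ S, d a / w * w = d a := fun a ha => Nat.div_mul_cancel (hdvd_w a ha)
      have himg : (S.image fun a => d a / w).card = k + 2 := by
        rw [Finset.card_image_of_injOn, hcard]
        intro a ha b hb hab
        have ha' : a ∈ S := ha
        have hb' : b ∈ S := hb
        apply hinj a ha' b hb'
        have hab' : d a / w = d b / w := hab
        rw [← hdivq a ha', ← hdivq b hb', hab']
      obtain ⟨y, hy, hybig⟩ := exists_big (S.image fun a => d a / w)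
        (hne.image _) (by
          intro x hx
          obtain ⟨a, ha, rfl⟩ := Finset.mem_image.1 hx
          have h1 := hd_gt a ha
          have h2 := hdivq a ha
          by_contra hlt
          push_neg at hlt
          interval_cases h : d a / w <;> omega)
      rw [himg] at hybig
      obtain ⟨a, ha, rfl⟩ := Finset.mem_image.1 hy
      have hda_big : (k + 3) * w ≤ d a := by
        calc (k + 3) * w ≤ d a / w * w := Nat.mul_le_mul_right w hybig
        _ = d a := hdivq a ha
      -- erase a is itself minimal
      have hmin' : ∀ R ⊆ S.erase a, R.Nonempty → R ≠ S.erase a → d a < R.gcd id := by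
        intro R hR hRne hRneq
        have hdvd : d a ∣ R.gcd id :=
          Finset.dvd_gcd fun x hx => Finset.gcd_dvd (hR hx)
        have hRpos : 0 < R.gcd id := by
          obtain ⟨x, hx⟩ := hRne
          exact Nat.pos_of_dvd_of_pos (Finset.gcd_dvd hx)
            (hpos x (Finset.mem_of_mem_erase (hR hx)))
        refine Nat.lt_of_le_of_ne (Nat.le_of_dvd hRpos hdvd) fun heq => ?_
        obtain ⟨b, hb, hbR⟩ := Finset.exists_of_ssubset (hR.ssubset_of_ne hRneq)
        have hiRne : insert a R ≠ S := by
          intro h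
          apply hbR
          have hbS : b ∈ insert a R := h ▸ Finset.mem_of_mem_erase hb
          rcases Finset.mem_insert.1 hbS with rfl | h'
          · exact absurd hb (Finset.notMem_erase _ _)
          · exact h'
        have hgcd : (insert a R).gcd id = w := by
          rw [Finset.gcd_insert, ← heq, hd]
          show GCDMonoid.gcd (id a) ((S.erase a).gcd id) = w
          rw [← Finset.gcd_insert, Finset.insert_erase ha]
        have := hmin (insert a R)
          (Finset.insert_subset ha (fun x hx => Finset.mem_of_mem_erase (hR hx)))
          ⟨a, Finset.mem_insert_self a R⟩ hiRne
        rw [hgcd] at this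
        omega
      have hIH := ih (k+1) (by omega) (S.erase a)
        (by rw [Finset.card_erase_of_mem ha, hcard]; omega)
        (herase_ne a ha)
        (fun x hx => hpos x (Finset.mem_of_mem_erase hx))
        (fun x hx => hle x (Finset.mem_of_mem_erase hx)) hmin'
      calc w * (k+2).factorial = (k+2) * w * (k+1).factorial := by
            rw [Nat.factorial_succ]; ring
        _ ≤ d a * (k+1).factorial :=
            Nat.mul_le_mul_right _ (le_trans (by nlinarith) hda_big)
        _ ≤ m := hIH

lemma two_pow_le_fac : ∀ n : ℕ, 0 < n → 2 ^ n ≤ 2 * n.factorial := by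
  intro n
  induction n with
  | zero => omega
  | succ k ihk =>
    intro _
    rcases Nat.eq_zero_or_pos k with rfl | hk
    · simp
    · have := ihk hk
      have hf : 2 ≤ k + 1 := by omega
      calc 2 ^ (k+1) = 2 * 2 ^ k := by ring
        _ ≤ 2 * (2 * k.factorial) := by omega
        _ ≤ 2 * ((k+1) * k.factorial) := by
            have := Nat.factorial_pos k; nlinarith
        _ = 2 * (k+1).factorial := by rw [Nat.factorial_succ]

theorem stmt0 (m : ℕ) (W : Finset ℕ) (hne : W.Nonempty)
    (hpos : ∀ x ∈ W, 0 < x) (hle : ∀ x ∈ W, x ≤ m) (w : ℕ) (hw : w = W.gcd id) :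
    ∃ W' ⊆ W, Nat.factorial W'.card ≤ m / w ∧ W'.gcd id = W.gcd id ∧
      (W'.card : ℝ) < Real.logb 2 ((m : ℝ) / (w : ℝ)) + 2 := by
  classical
  have hwpos : 0 < w := by
    obtain ⟨a, ha⟩ := hne
    exact hw ▸ Nat.pos_of_dvd_of_pos (Finset.gcd_dvd ha) (hpos a ha)
  -- family of subsets with the same gcd
  set F := W.powerset.filter (fun S => S.gcd id = W.gcd id ∧ S.Nonempty) with hF
  have hWF : W ∈ F := by
    simp [hF, Finset.mem_filter, Finset.mem_powerset, hne]
  obtain ⟨S, hSF, hSmin⟩ := Finset.exists_min_image F Finset.card ⟨W, hWF⟩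
  simp only [hF, Finset.mem_filter, Finset.mem_powerset] at hSF
  obtain ⟨hSW, hSgcd, hSne⟩ := hSF
  have hSpos : ∀ x ∈ S, 0 < x := fun x hx => hpos x (hSW hx)
  have hSle : ∀ x ∈ S, x ≤ m := fun x hx => hle x (hSW hx)
  have hSmin' : ∀ R ⊆ S, R.Nonempty → R ≠ S → S.gcd id < R.gcd id := by
    intro R hR hRne hRneq
    have hdvd : S.gcd id ∣ R.gcd id := Finset.dvd_gcd fun x hx => Finset.gcd_dvd (hR hx)
    have hRpos : 0 < R.gcd id := by
      obtain ⟨x, hx⟩ := hRne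
      exact Nat.pos_of_dvd_of_pos (Finset.gcd_dvd hx) (hSpos x (hR hx))
    refine Nat.lt_of_le_of_ne (Nat.le_of_dvd hRpos hdvd) fun heq => ?_
    have hRF : R ∈ F := by
      simp only [hF, Finset.mem_filter, Finset.mem_powerset]
      exact ⟨hR.trans hSW, by rw [← heq, hSgcd], hRne⟩
    have := hSmin R hRF
    have := Finset.card_lt_card (hR.ssubset_of_ne hRneq)
    omega
  have hkey := key m S.card S rfl hSne hSpos hSle hSmin'
  rw [hSgcd, ← hw] at hkey
  set k := S.card with hk
  have hkpos : 0 < k := Finset.card_pos.2 hSne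
  have hfac : k.factorial ≤ m / w := by
    rw [Nat.le_div_iff_mul_le hwpos]
    calc k.factorial * w = w * k.factorial := by ring
      _ ≤ m := hkey
  refine ⟨S, hSW, hfac, hSgcd, ?_⟩
  -- real inequality
  have hmw : (0:ℝ) < (m:ℝ) / (w:ℝ) := by
    have hm : 0 < m := lt_of_lt_of_le (by positivity : (0:ℕ) < w * k.factorial) hkey
    positivity
  rw [← sub_lt_iff_lt_add, Real.lt_logb_iff_rpow_lt (by norm_num) hmw]
  have h1 : (2:ℝ) ^ ((k:ℝ) - 2) = (2:ℝ) ^ (k:ℝ) / 4 := by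
    rw [Real.rpow_sub (by norm_num)]
    norm_num
  have h2 : (2:ℝ) ^ (k:ℝ) = ((2 ^ k : ℕ) : ℝ) := by
    rw [Real.rpow_natCast]; push_cast; ring
  have h3 : (2:ℝ) ^ k ≤ 2 * (k.factorial : ℝ) := by
    have := two_pow_le_fac k hkpos
    exact_mod_cast this
  have h4 : (k.factorial : ℝ) ≤ (m:ℝ) / (w:ℝ) := by
    rw [le_div_iff₀ (by exact_mod_cast hwpos)]
    exact_mod_cast (by linarith [hkey] : (k.factorial * w : ℕ) ≤ m)
  have hfacpos : (0:ℝ) < (k.factorial : ℝ) := by exact_mod_cast Nat.factorial_pos k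
  calc (2:ℝ) ^ ((k:ℝ) - 2) = (2:ℝ) ^ (k:ℝ) / 4 := h1
    _ ≤ 2 * (k.factorial : ℝ) / 4 := by
        rw [h2]; push_cast; linarith
    _ < (k.factorial : ℝ) := by linarith
    _ ≤ (m:ℝ)/(w:ℝ) := h4
end

section
/- Let k be a positive integer and J = {j₁,…,j_ℓ} a set of positive integers with 1 ≤ j_i ≤ √k/ℓ for all i and d := gcd(j₁,…,j_ℓ) dividing k. Then there exist nonnegative integers λ₁,…,λ_{ℓ−1} ≤ √k and λ_ℓ ≤ k such that λ₁j₁ + λ₂j₂ + ⋯ + λ_ℓ j_ℓ = k. -/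
lemma bez (y d' k : ℕ) (hd' : 0 < d') (h : Nat.gcd y d' ∣ k) :
    ∃ lam : ℕ, lam < d' ∧ (d' : ℤ) ∣ (k : ℤ) - lam * y := by
  obtain ⟨c, hc⟩ := h
  have hb : (Nat.gcd y d' : ℤ) = y * Nat.gcdA y d' + d' * Nat.gcdB y d' := Nat.gcd_eq_gcd_ab y d'
  set lam0 : ℤ := c * Nat.gcdA y d' with hl0
  have hd'z : (0:ℤ) < d' := by exact_mod_cast hd'
  refine ⟨(lam0 % d').toNat, ?_, ?_⟩
  · have h1 : lam0 % (d' : ℤ) < d' := Int.emod_lt_of_pos _ hd'z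
    omega
  · have h0 : (0:ℤ) ≤ lam0 % d' := Int.emod_nonneg _ hd'z.ne'
    rw [Int.toNat_of_nonneg h0]
    have h2 : (d' : ℤ) ∣ (k : ℤ) - lam0 * y := by
      refine ⟨c * Nat.gcdB y d', ?_⟩
      have hck : (k : ℤ) = Nat.gcd y d' * c := by exact_mod_cast hc
      rw [hck, hb]; ring
    have h3 : (d':ℤ) ∣ (lam0 - lam0 % d') := by
      have := Int.mul_ediv_add_emod lam0 d'
      exact ⟨lam0 / d', by linarith⟩
    have : (k:ℤ) - (lam0 % d') * y = ((k:ℤ) - lam0 * y) + (lam0 - lam0 % d') * y := by ring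
    rw [this]
    exact dvd_add h2 (h3.mul_right _)

lemma gcd_univ_succ (n : ℕ) (j : Fin (n+1) → ℕ) :
    Finset.univ.gcd j = Nat.gcd (j 0) (Finset.univ.gcd (j ∘ Fin.succ)) := by
  rw [Fin.univ_succ, Finset.cons_eq_insert, Finset.gcd_insert, Finset.map_eq_image,
    Finset.gcd_image]
  rfl

lemma aux : ∀ (m : ℕ) (j : Fin (m+1) → ℕ) (C k : ℕ),
    (∀ i, 1 ≤ j i) → (∀ a b, j a * j b < C) → m * C ≤ k →
    Finset.univ.gcd j ∣ k →
    ∃ lam : Fin (m+1) → ℕ,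
      (∀ i : Fin (m+1), ∀ h : i.val + 1 < m + 1, lam i < j ⟨i.val+1, h⟩) ∧
      ∑ i, lam i * j i = k := by
  intro m
  induction m with
  | zero =>
    intro j C k h1 hC hm hd
    have hg : Finset.univ.gcd j = j 0 := by
      rw [show (Finset.univ : Finset (Fin 1)) = {0} from rfl, Finset.gcd_singleton]
      simp
    refine ⟨fun _ => k / j 0, fun i h => by omega, ?_⟩
    rw [Fin.sum_univ_one, Nat.div_mul_cancel (hg ▸ hd)]
  | succ m ih =>
    intro j C k h1 hC hm hd
    set d' := Finset.univ.gcd (j ∘ Fin.succ) with hd'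
    have hdvd1 : d' ∣ j 1 := Finset.gcd_dvd (Finset.mem_univ (0 : Fin (m+1)))
    have hd'pos : 0 < d' := Nat.pos_of_dvd_of_pos hdvd1 (h1 1)
    have hd'le : d' ≤ j 1 := Nat.le_of_dvd (h1 1) hdvd1
    obtain ⟨lam0, hl0, hz⟩ := bez (j 0) d' k hd'pos ((gcd_univ_succ _ j) ▸ hd)
    have hj0 : 1 ≤ j 0 := h1 0
    have hmul : (lam0 + 1) * j 0 ≤ j 1 * j 0 :=
      Nat.mul_le_mul_right _ (by omega)
    have hC10 : j 1 * j 0 < C := hC 1 0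
    have hCk : (m+1) * C ≤ k := hm
    have hle : lam0 * j 0 ≤ k := by nlinarith
    have hk' : m * C ≤ k - lam0 * j 0 := by nlinarith [Nat.sub_add_cancel hle]
    have hdk' : d' ∣ k - lam0 * j 0 := by
      have : ((k - lam0 * j 0 : ℕ) : ℤ) = (k : ℤ) - lam0 * j 0 := by
        push_cast [Nat.cast_sub hle]; ring
      exact_mod_cast this ▸ hz
    obtain ⟨lam', hb', hs'⟩ := ih (j ∘ Fin.succ) C (k - lam0 * j 0)
      (fun i => h1 _) (fun a b => hC _ _) hk' hdk'
    refine ⟨Fin.cases lam0 lam', ?_, ?_⟩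
    · intro i
      induction i using Fin.cases with
      | zero =>
        intro h
        simp only [Fin.cases_zero]
        have : (⟨(0:Fin (m+2)).val + 1, h⟩ : Fin (m+2)) = 1 := by
          ext; simp [Fin.val_one]
        rw [this]; omega
      | succ i' =>
        intro h
        simp only [Fin.cases_succ]
        have h2 : i'.val + 1 < m + 1 := by
          have := i'.isLt; simpa using h
        have := hb' i' h2
        convert this using 2
        rfl
    · rw [Fin.sum_univ_succ]
      simp only [Fin.cases_zero, Fin.cases_succ, Function.comp_apply] at hs' ⊢
      omega

theorem stmt4 (k ℓ : ℕ) (hk : 0 < k) (hℓ : 0 < ℓ) (j : Fin ℓ → ℕ)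
    (hj1 : ∀ i, 1 ≤ j i) (hj2 : ∀ i, (j i : ℝ) ≤ Real.sqrt k / ℓ)
    (hd : (Finset.univ.gcd j) ∣ k) :
    ∃ lam : Fin ℓ → ℕ,
      (∀ i : Fin ℓ, i.val + 1 < ℓ → lam i ≤ Nat.sqrt k) ∧
      (∀ i : Fin ℓ, lam i ≤ k) ∧
      ∑ i, lam i * j i = k := by
  obtain ⟨m, rfl⟩ : ∃ m, ℓ = m + 1 := ⟨ℓ - 1, by omega⟩
  have hℓR : (1:ℝ) ≤ (m+1 : ℕ) := by exact_mod_cast hℓ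
  have hℓpos : (0:ℝ) < ((m+1 : ℕ) : ℝ) := by positivity
  have hsqnn : (0:ℝ) ≤ Real.sqrt k := Real.sqrt_nonneg _
  have hsq : ∀ i, (j i : ℝ) ≤ Real.sqrt k := fun i =>
    (hj2 i).trans (div_le_self hsqnn hℓR)
  have hjk : ∀ i, j i * j i ≤ k := by
    intro i
    have h2 : ((j i : ℕ) : ℝ) * ((j i : ℕ) : ℝ) ≤ Real.sqrt k * Real.sqrt k :=
      mul_le_mul (hsq i) (hsq i) (by positivity) hsqnn
    rw [Real.mul_self_sqrt (by positivity)] at h2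
    exact_mod_cast h2
  have hjsqrt : ∀ i, j i ≤ Nat.sqrt k := fun i => Nat.le_sqrt.mpr (hjk i)
  have hprod : ∀ a b, (m+1)^2 * (j a * j b) ≤ k := by
    intro a b
    have h2 : ((j a : ℕ) : ℝ) * ((j b : ℕ) : ℝ) ≤
        (Real.sqrt k / (m+1:ℕ)) * (Real.sqrt k / (m+1:ℕ)) :=
      mul_le_mul (hj2 a) (hj2 b) (by positivity) (by positivity)
    have h3 : (((m+1)^2 * (j a * j b) : ℕ) : ℝ) ≤ (k : ℝ) := by
      push_cast
      have hs : Real.sqrt k * Real.sqrt k = k := Real.mul_self_sqrt (by positivity)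
      have : ((m:ℝ)+1)^2 * ((j a : ℝ) * (j b : ℝ)) ≤
          ((m:ℝ)+1)^2 * ((Real.sqrt k / (m+1:ℕ)) * (Real.sqrt k / (m+1:ℕ))) := by
        apply mul_le_mul_of_nonneg_left _ (by positivity)
        exact_mod_cast h2
      calc ((m:ℝ)+1)^2 * ((j a : ℝ) * (j b : ℝ)) ≤ _ := this
        _ = Real.sqrt k * Real.sqrt k := by field_simp; push_cast; ring
        _ = k := hs
    exact_mod_cast h3
  set C := k / (m+1)^2 + 1 with hCdef
  have hsqpos : 0 < (m+1)^2 := by positivity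
  have hC : ∀ a b, j a * j b < C := by
    intro a b
    have h := hprod a b
    have h2 : j a * j b ≤ k / (m+1)^2 :=
      (Nat.le_div_iff_mul_le hsqpos).mpr (by rw [mul_comm]; exact h)
    omega
  have hk2 : (m+1)^2 ≤ k := by
    calc (m+1)^2 = (m+1)^2 * 1 := by ring
      _ ≤ (m+1)^2 * (j 0 * j 0) := Nat.mul_le_mul_left _ (Nat.mul_le_mul (hj1 0) (hj1 0))
      _ ≤ k := hprod 0 0
  have hmC : m * C ≤ k := by
    have hq := Nat.div_add_mod k ((m+1)^2)
    have hr := Nat.mod_lt k hsqpos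
    have hq1 : 1 ≤ k / (m+1)^2 := (Nat.one_le_div_iff hsqpos).mpr hk2
    set q := k / (m+1)^2
    set r := k % (m+1)^2
    calc m * C = m * (q + 1) := rfl
      _ ≤ (m+1)^2 * q + r := by nlinarith
      _ = k := hq
  obtain ⟨lam, hb, hs⟩ := aux m j C k hj1 hC hmC hd
  refine ⟨lam, ?_, ?_, hs⟩
  · intro i h
    have h1 := hb i h
    have h2 := hjsqrt ⟨i.val + 1, h⟩
    omega
  · intro i
    have h1 : lam i * j i ≤ k := hs ▸ Finset.single_le_sum
      (fun a _ => Nat.zero_le (lam a * j a)) (Finset.mem_univ i)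
    exact le_trans (Nat.le_mul_of_pos_right _ (hj1 i)) h1
end

section
/- Let M be a q × n matrix over F₂ such that the sum of any nonempty collection of at most k columns of M is nonzero. Then 2^q ≥ ∑_{i=0}^{⌊k/2⌋} C(n,i). Consequently q = Ω(k log(n/k)). -/
open Matrix

theorem stmt5 (q n k : ℕ) (M : Matrix (Fin q) (Fin n) (ZMod 2))
    (h : ∀ S : Finset (Fin n), S.Nonempty → S.card ≤ k → ∑ i ∈ S, Mᵀ i ≠ 0) :
    ∑ i ∈ Finset.range (k / 2 + 1), n.choose i ≤ 2 ^ q := by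
  classical
  set A : Finset (Finset (Fin n)) :=
    (Finset.range (k / 2 + 1)).biUnion (fun i => Finset.powersetCard i Finset.univ) with hA
  have hAmem : ∀ S ∈ A, S.card ≤ k / 2 := by
    intro S hS
    simp only [hA, Finset.mem_biUnion, Finset.mem_range, Finset.mem_powersetCard] at hS
    obtain ⟨i, hi, _, hc⟩ := hS
    omega
  have hcardA : A.card = ∑ i ∈ Finset.range (k / 2 + 1), n.choose i := by
    rw [hA, Finset.card_biUnion]
    · apply Finset.sum_congr rfl
      intro i _
      simp [Finset.card_powersetCard]
    · intro i _ j _ hij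
      simp only [Finset.disjoint_left, Finset.mem_powersetCard]
      rintro S ⟨_, h1⟩ ⟨_, h2⟩
      exact hij (h1 ▸ h2 ▸ rfl)
  -- injectivity of S ↦ ∑ columns on A
  have hinj : Set.InjOn (fun S : Finset (Fin n) => ∑ i ∈ S, Mᵀ i) A := by
    intro S hS T hT hST
    by_contra hne
    have hsum : ∑ i ∈ (symmDiff S T), Mᵀ i = 0 := by
      have hdisj : Disjoint (S \ T) (T \ S) := disjoint_sdiff_sdiff
      have hsd : (symmDiff S T) = (S \ T) ∪ (T \ S) := by
        rw [symmDiff_def]; rfl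
      have h1 : ∑ i ∈ S ∩ T, Mᵀ i + ∑ i ∈ S \ T, Mᵀ i = ∑ i ∈ S, Mᵀ i :=
        Finset.sum_inter_add_sum_sdiff S T _
      have h2 : ∑ i ∈ T ∩ S, Mᵀ i + ∑ i ∈ T \ S, Mᵀ i = ∑ i ∈ T, Mᵀ i :=
        Finset.sum_inter_add_sum_sdiff T S _
      have hIC : S ∩ T = T ∩ S := Finset.inter_comm S T
      have key : ∑ i ∈ (symmDiff S T), Mᵀ i = ∑ i ∈ S, Mᵀ i + ∑ i ∈ T, Mᵀ i := by
        rw [hsd, Finset.sum_union hdisj (f := fun i => Mᵀ i), ← h1, ← h2, hIC]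
        funext x
        simp only [Pi.add_apply]
        ring_nf
        have h20 : (2 : ZMod 2) = 0 := rfl
        rw [h20, mul_zero, add_zero]
      have hST' : ∑ i ∈ S, Mᵀ i = ∑ i ∈ T, Mᵀ i := hST
      rw [key, hST']
      funext x
      simp only [Pi.add_apply, Pi.zero_apply]
      exact CharTwo.add_self_eq_zero _
    have hne' : (symmDiff S T).Nonempty := by
      rw [Finset.nonempty_iff_ne_empty]
      intro hemp
      exact hne (symmDiff_eq_bot.mp hemp)
    have hcard : (symmDiff S T).card ≤ k := by
      have h1 : (symmDiff S T) ⊆ S ∪ T := symmDiff_le_sup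
      have := Finset.card_le_card h1
      have := Finset.card_union_le S T
      have := hAmem S hS
      have := hAmem T hT
      omega
    exact h _ hne' hcard hsum
  have := Finset.card_le_card_of_injOn (fun S : Finset (Fin n) => ∑ i ∈ S, Mᵀ i)
    (fun S _ => Finset.mem_univ _) hinj
  simp only [Finset.card_univ] at this
  calc ∑ i ∈ Finset.range (k / 2 + 1), n.choose i = A.card := hcardA.symm
    _ ≤ Fintype.card (Fin q → ZMod 2) := this
    _ = 2 ^ q := by simp
end

section
/- Let M be a q × n matrix over F₂, and for j ≥ 1 let ℓ_j(M) denote the maximum number of pairwise disjoint j-subsets A of [n] with ∑_{i∈A} M_i = 0. Suppose that for each of the distinct positive integers j₁,…,j_w we have ℓ_{j_s}(M) ≥ t where t = m·q₀·w bounds λ₁j₁+⋯+λ_w j_w for all choices with λ_s ∈ [q₀] and j_s ∈ [m]. Then for any λ₁,…,λ_w ∈ [q₀] there exists a set U ⊆ [n] of size λ₁j₁+⋯+λ_w j_w with ∑_{i∈U} M_i = 0. -/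
open Matrix

theorem stmt8 (q n m q₀ w : ℕ) (M : Matrix (Fin q) (Fin n) (ZMod 2))
    (j : Fin w → ℕ) (hjinj : Function.Injective j)
    (hjm : ∀ s, 1 ≤ j s ∧ j s ≤ m)
    (hfam : ∀ s : Fin w, ∃ A : Fin (m * q₀ * w) → Finset (Fin n),
      (∀ a, (A a).card = j s ∧ ∑ i ∈ A a, Mᵀ i = 0) ∧
      (∀ a b, a ≠ b → Disjoint (A a) (A b))) :
    ∀ lam : Fin w → ℕ, (∀ s, 1 ≤ lam s ∧ lam s ≤ q₀) →
      ∃ U : Finset (Fin n), U.card = ∑ s, lam s * j s ∧ ∑ i ∈ U, Mᵀ i = 0 := by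
  intro lam hlam
  classical
  suffices h : ∀ S : Finset (Fin w), ∃ U : Finset (Fin n),
      U.card = ∑ s ∈ S, lam s * j s ∧ ∑ i ∈ U, Mᵀ i = 0 from h Finset.univ
  intro S
  induction S using Finset.induction_on with
  | empty => exact ⟨∅, by simp, by exact Finset.sum_empty⟩
  | @insert s₀ S hs ih =>
    obtain ⟨U, hUcard, hUsum⟩ := ih
    obtain ⟨A, hA1, hA2⟩ := hfam s₀
    have hm : 1 ≤ m := le_trans (hjm s₀).1 (hjm s₀).2
    have hSw : S.card + 1 ≤ w := by
      have := Finset.card_le_univ (insert s₀ S)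
      rwa [Finset.card_insert_of_notMem hs, Fintype.card_fin] at this
    have hUb : U.card ≤ S.card * (q₀ * m) := by
      rw [hUcard]
      calc ∑ s ∈ S, lam s * j s ≤ ∑ _s ∈ S, q₀ * m := by
            refine Finset.sum_le_sum fun s _ => Nat.mul_le_mul (hlam s).2 (hjm s).2
        _ = S.card * (q₀ * m) := by rw [Finset.sum_const, smul_eq_mul]
    set B : Finset (Fin (m * q₀ * w)) :=
      Finset.univ.filter (fun a => ¬ Disjoint (A a) U) with hB
    set G : Finset (Fin (m * q₀ * w)) :=
      Finset.univ.filter (fun a => Disjoint (A a) U) with hG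
    have hBcard : B.card ≤ U.card := by
      have hdisj : ∀ a ∈ B, ∀ b ∈ B, a ≠ b →
          Disjoint (A a ∩ U) (A b ∩ U) := by
        intro a _ b _ hab
        exact Finset.disjoint_left.mpr fun x hx hy =>
          (Finset.disjoint_left.mp (hA2 a b hab)) (Finset.mem_inter.mp hx).1
            (Finset.mem_inter.mp hy).1
      calc B.card = ∑ _a ∈ B, 1 := by simp
        _ ≤ ∑ a ∈ B, (A a ∩ U).card := by
            refine Finset.sum_le_sum fun a ha => ?_
            have : ¬ Disjoint (A a) U := by
              simpa [hB] using ha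
            have hne : (A a ∩ U).Nonempty := by
              rw [Finset.not_disjoint_iff] at this
              obtain ⟨x, hx1, hx2⟩ := this
              exact ⟨x, Finset.mem_inter.mpr ⟨hx1, hx2⟩⟩
            exact Nat.one_le_iff_ne_zero.mpr (by simpa [Finset.card_eq_zero] using hne.ne_empty)
        _ = (B.biUnion (fun a => A a ∩ U)).card := (Finset.card_biUnion hdisj).symm
        _ ≤ U.card := Finset.card_le_card (by
            intro x hx
            obtain ⟨a, _, hxa⟩ := Finset.mem_biUnion.mp hx
            exact (Finset.mem_inter.mp hxa).2)
    have hGB : G.card + B.card = m * q₀ * w := by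
      rw [hG, hB]
      rw [Finset.card_filter_add_card_filter_not]
      simp
    have hlamG : lam s₀ ≤ G.card := by
      have h1 : lam s₀ + U.card ≤ m * q₀ * w := by
        calc lam s₀ + U.card ≤ q₀ * m + S.card * (q₀ * m) :=
              Nat.add_le_add (le_trans (hlam s₀).2 (Nat.le_mul_of_pos_right q₀ hm)) hUb
          _ = (S.card + 1) * (q₀ * m) := by ring
          _ ≤ w * (q₀ * m) := Nat.mul_le_mul_right _ hSw
          _ = m * q₀ * w := by ring
      omega
    obtain ⟨T, hTG, hTcard⟩ := Finset.exists_subset_card_eq hlamG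
    have hTdisjU : ∀ a ∈ T, Disjoint (A a) U := by
      intro a ha
      have := hTG ha
      simpa [hG] using this
    have hTpd : ∀ a ∈ T, ∀ b ∈ T, a ≠ b → Disjoint (A a) (A b) :=
      fun a _ b _ hab => hA2 a b hab
    have hdisjUB : Disjoint U (T.biUnion A) := by
      rw [Finset.disjoint_biUnion_right]
      exact fun a ha => (hTdisjU a ha).symm
    refine ⟨U ∪ T.biUnion A, ?_, ?_⟩
    · rw [Finset.card_union_of_disjoint hdisjUB, Finset.card_biUnion hTpd,
        Finset.sum_insert hs, hUcard]
      have : ∑ a ∈ T, (A a).card = lam s₀ * j s₀ := by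
        rw [Finset.sum_congr rfl (fun a _ => (hA1 a).1), Finset.sum_const, smul_eq_mul, hTcard]
      rw [this]; ring
    · have e : ∑ i ∈ U ∪ T.biUnion A, Mᵀ i = ∑ i ∈ U, Mᵀ i + ∑ i ∈ T.biUnion A, Mᵀ i :=
        Finset.sum_union hdisjUB
      have e2 : ∑ i ∈ T.biUnion A, Mᵀ i = ∑ a ∈ T, ∑ i ∈ A a, Mᵀ i :=
        Finset.sum_biUnion (fun a _ b _ hab => hTpd a ‹_› b ‹_› hab)
      rw [e, hUsum, e2, zero_add]
      exact Finset.sum_eq_zero (fun a _ => (hA1 a).2)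
end

section
/- Let M be a q × n matrix over F₂ that is ([d],ℓ)-good, i.e., for every j ∈ {1,…,d} there are at most ℓ pairwise disjoint j-subsets of columns summing to zero. Then one can delete at most ℓ·d(d+1)/2 ≤ ℓd²/2 + ℓd/2 columns of M to obtain a matrix in which no nonempty set of at most d columns sums to zero; consequently 2^q ≥ ∑_{i=0}^{⌊d/2⌋} C(n − ℓd(d+1)/2, i). -/
open Matrix

/-- `N` is `(j, ℓ)`-good: every pairwise-disjoint family of `j`-subsets of columns
each summing to zero has size at most `ℓ`. -/
def IsGood {q n : ℕ} (N : Matrix (Fin q) (Fin n) (ZMod 2)) (j ℓ : ℕ) : Prop :=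
  ∀ 𝒜 : Finset (Finset (Fin n)),
    (∀ A ∈ 𝒜, A.card = j ∧ ∑ i ∈ A, Nᵀ i = 0) →
    (𝒜 : Set (Finset (Fin n))).Pairwise Disjoint → 𝒜.card ≤ ℓ

theorem stmt10 (q n d ℓ : ℕ) (M : Matrix (Fin q) (Fin n) (ZMod 2))
    (hgood : ∀ j, 1 ≤ j → j ≤ d → IsGood M j ℓ) :
    (∃ R : Finset (Fin n), R.card ≤ ℓ * (d * (d + 1) / 2) ∧
      ∀ S : Finset (Fin n), S ⊆ Finset.univ \ R → S.Nonempty → S.card ≤ d →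
        ∑ i ∈ S, Mᵀ i ≠ 0) ∧
    ∑ i ∈ Finset.range (d / 2 + 1), (n - ℓ * (d * (d + 1) / 2)).choose i ≤ 2 ^ q := by
  classical
  set f : Finset (Fin n) → (Fin q → ZMod 2) := fun T => ∑ i ∈ T, Mᵀ i with hf
  have hchar : ∀ x : Fin q → ZMod 2, x + x = 0 := by
    intro x; funext i
    have : ∀ a : ZMod 2, a + a = 0 := by decide
    exact this (x i)
  -- symmetric difference of equal-sum sets has zero sum
  have hsymm : ∀ a b : Finset (Fin n), f a = f b → f ((a \ b) ∪ (b \ a)) = 0 := by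
    intro a b hab
    have hdis : Disjoint (a \ b) (b \ a) := disjoint_sdiff_sdiff
    have h1 : ∑ i ∈ a ∩ b, Mᵀ i + ∑ i ∈ a \ b, Mᵀ i = f a :=
      Finset.sum_inter_add_sum_sdiff a b _
    have h2 : ∑ i ∈ b ∩ a, Mᵀ i + ∑ i ∈ b \ a, Mᵀ i = f b :=
      Finset.sum_inter_add_sum_sdiff b a _
    rw [Finset.inter_comm b a] at h2
    have huv : ∑ i ∈ a \ b, Mᵀ i = ∑ i ∈ b \ a, Mᵀ i := by
      have := h1.trans (hab.trans h2.symm)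
      exact add_left_cancel this
    show (∑ i ∈ (a \ b) ∪ (b \ a), Mᵀ i) = 0
    exact (Finset.sum_union hdis).trans (by rw [huv]; exact hchar _)
  -- choose a maximum pairwise-disjoint zero-sum family for each size j
  have hex : ∀ j : ℕ, ∃ F : Finset (Finset (Fin n)),
      ((∀ A ∈ F, A.card = j ∧ f A = 0) ∧ (F : Set (Finset (Fin n))).Pairwise Disjoint) ∧
      ∀ G : Finset (Finset (Fin n)),
        ((∀ A ∈ G, A.card = j ∧ f A = 0) ∧ (G : Set (Finset (Fin n))).Pairwise Disjoint) →
          G.card ≤ F.card := by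
    intro j
    obtain ⟨F, hF, hmax⟩ := Finset.exists_max_image
      (Finset.univ.filter fun 𝒜 : Finset (Finset (Fin n)) =>
        (∀ A ∈ 𝒜, A.card = j ∧ f A = 0) ∧ (𝒜 : Set (Finset (Fin n))).Pairwise Disjoint)
      Finset.card ⟨∅, by simp⟩
    rw [Finset.mem_filter] at hF
    refine ⟨F, hF.2, fun G hG => hmax G ?_⟩
    rw [Finset.mem_filter]
    exact ⟨Finset.mem_univ _, hG⟩
  choose F hFvalid hFmax using hex
  set R : Finset (Fin n) := (Finset.Icc 1 d).biUnion (fun j => (F j).biUnion id) with hR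
  -- cardinality bound on R
  have hcardF : ∀ j, 1 ≤ j → j ≤ d → (F j).card ≤ ℓ := by
    intro j h1 h2
    exact hgood j h1 h2 (F j) (hFvalid j).1 (hFvalid j).2
  have hRcard : R.card ≤ ℓ * (d * (d + 1) / 2) := by
    have hgauss : (∑ j ∈ Finset.Icc 1 d, j) = d * (d + 1) / 2 := by
      have h2 : (∑ i ∈ Finset.range (d + 1), i) * 2 = (d + 1) * d :=
        Finset.sum_range_id_mul_two (d + 1)
      have heq : ∑ j ∈ Finset.Icc 1 d, j = ∑ i ∈ Finset.range (d + 1), i := by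
        rw [Finset.range_eq_Ico, ← Finset.Ico_add_one_right_eq_Icc]
        rw [Finset.sum_Ico_eq_sum_range, Finset.sum_Ico_eq_sum_range]
        simp [Finset.sum_range_succ', add_comm]
      have h3 : (∑ j ∈ Finset.Icc 1 d, j) * 2 = d * (d + 1) := by rw [heq, h2]; ring
      omega
    calc R.card ≤ ∑ j ∈ Finset.Icc 1 d, ((F j).biUnion id).card := Finset.card_biUnion_le
      _ ≤ ∑ j ∈ Finset.Icc 1 d, ℓ * j := by
          apply Finset.sum_le_sum
          intro j hj
          rw [Finset.mem_Icc] at hj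
          calc ((F j).biUnion id).card ≤ ∑ A ∈ F j, (id A).card := Finset.card_biUnion_le
            _ = ∑ A ∈ F j, j := by
                apply Finset.sum_congr rfl
                intro A hA; exact ((hFvalid j).1 A hA).1
            _ = (F j).card * j := by rw [Finset.sum_const, smul_eq_mul]
            _ ≤ ℓ * j := Nat.mul_le_mul_right j (hcardF j hj.1 hj.2)
      _ = ℓ * ∑ j ∈ Finset.Icc 1 d, j := by rw [Finset.mul_sum]
      _ = ℓ * (d * (d + 1) / 2) := by rw [hgauss]
  -- key property of R
  have hRprop : ∀ S : Finset (Fin n), S ⊆ Finset.univ \ R → S.Nonempty → S.card ≤ d →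
      ∑ i ∈ S, Mᵀ i ≠ 0 := by
    intro S hS hne hcard hzero
    set j := S.card with hj
    have h1j : 1 ≤ j := Finset.card_pos.mpr hne
    have hjd : j ≤ d := hcard
    have hSR : Disjoint S R := by
      rw [Finset.disjoint_left]
      intro x hxS hxR
      have := hS hxS
      rw [Finset.mem_sdiff] at this
      exact this.2 hxR
    have hAR : ∀ A ∈ F j, A ⊆ R := by
      intro A hA x hx
      rw [hR]
      apply Finset.mem_biUnion.mpr
      exact ⟨j, Finset.mem_Icc.mpr ⟨h1j, hjd⟩, Finset.mem_biUnion.mpr ⟨A, hA, hx⟩⟩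
    have hSA : ∀ A ∈ F j, Disjoint S A := fun A hA =>
      Finset.disjoint_left.mpr fun x hxS hxA => Finset.disjoint_left.mp hSR hxS (hAR A hA hxA)
    have hSnotin : S ∉ F j := by
      intro hmem
      have : Disjoint S S := hSA S hmem
      exact hne.ne_empty (disjoint_self.mp this)
    have hins : ((insert S (F j) : Finset (Finset (Fin n))) : Set (Finset (Fin n))).Pairwise
        Disjoint := by
      rw [Finset.coe_insert]
      exact (Set.pairwise_insert_of_symm_of_notMem
        (by simpa using hSnotin)).mpr
        ⟨(hFvalid j).2, hSA⟩
    have hvalid : ∀ A ∈ insert S (F j), A.card = j ∧ f A = 0 := by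
      intro A hA
      rcases Finset.mem_insert.mp hA with rfl | hA
      · exact ⟨rfl, hzero⟩
      · exact (hFvalid j).1 A hA
    have := hFmax j (insert S (F j)) ⟨hvalid, hins⟩
    rw [Finset.card_insert_of_notMem hSnotin] at this
    omega
  refine ⟨⟨R, hRcard, hRprop⟩, ?_⟩
  -- Hamming bound
  set C : Finset (Fin n) := Finset.univ \ R with hC
  have hCcard : n - ℓ * (d * (d + 1) / 2) ≤ C.card := by
    rw [hC, Finset.card_sdiff_of_subset (Finset.subset_univ R)]
    simp only [Finset.card_univ, Fintype.card_fin]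
    omega
  set 𝒯 : Finset (Finset (Fin n)) :=
    (Finset.range (d / 2 + 1)).biUnion (fun i => C.powersetCard i) with h𝒯
  have h𝒯card : 𝒯.card = ∑ i ∈ Finset.range (d / 2 + 1), (C.card).choose i := by
    rw [h𝒯, Finset.card_biUnion]
    · apply Finset.sum_congr rfl
      intro i _; exact Finset.card_powersetCard i C
    · intro i _ j _ hij
      rw [Function.onFun, Finset.disjoint_left]
      intro T hTi hTj
      rw [Finset.mem_powersetCard] at hTi hTj
      exact hij (hTi.2.symm.trans hTj.2)
  have hmem𝒯 : ∀ T ∈ 𝒯, T ⊆ C ∧ T.card ≤ d / 2 := by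
    intro T hT
    rw [h𝒯, Finset.mem_biUnion] at hT
    obtain ⟨i, hi, hTi⟩ := hT
    rw [Finset.mem_powersetCard] at hTi
    rw [Finset.mem_range] at hi
    exact ⟨hTi.1, by omega⟩
  have hinj : Set.InjOn f (𝒯 : Set (Finset (Fin n))) := by
    intro T hT T' hT' heq
    by_contra hne
    obtain ⟨hTC, hTc⟩ := hmem𝒯 T hT
    obtain ⟨hTC', hTc'⟩ := hmem𝒯 T' hT'
    set S : Finset (Fin n) := (T \ T') ∪ (T' \ T) with hS
    have hSne : S.Nonempty := by
      rw [Finset.nonempty_iff_ne_empty]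
      intro h
      rw [hS, Finset.union_eq_empty, Finset.sdiff_eq_empty_iff_subset,
        Finset.sdiff_eq_empty_iff_subset] at h
      exact hne (Finset.Subset.antisymm h.1 h.2)
    have hScard : S.card ≤ d := by
      calc S.card ≤ (T \ T').card + (T' \ T).card := Finset.card_union_le _ _
        _ ≤ T.card + T'.card :=
            Nat.add_le_add (Finset.card_le_card (Finset.sdiff_subset))
              (Finset.card_le_card (Finset.sdiff_subset))
        _ ≤ d := by omega
    have hSsub : S ⊆ Finset.univ \ R := by
      intro x hx
      rw [hS, Finset.mem_union] at hx
      rcases hx with hx | hx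
      · exact hTC (Finset.mem_sdiff.mp hx).1
      · exact hTC' (Finset.mem_sdiff.mp hx).1
    exact hRprop S hSsub hSne hScard (hsymm T T' heq)
  have h2q : 𝒯.card ≤ 2 ^ q := by
    have := Finset.card_le_card_of_injOn f
      (fun T _ => Finset.mem_univ (f T)) hinj
    calc 𝒯.card ≤ (Finset.univ : Finset (Fin q → ZMod 2)).card := this
      _ = 2 ^ q := by
          rw [Finset.card_univ, Fintype.card_fun]
          simp [ZMod.card]
  calc ∑ i ∈ Finset.range (d / 2 + 1), (n - ℓ * (d * (d + 1) / 2)).choose i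
      ≤ ∑ i ∈ Finset.range (d / 2 + 1), (C.card).choose i := by
        apply Finset.sum_le_sum
        intro i _
        exact Nat.choose_le_choose i hCcard
    _ = 𝒯.card := h𝒯card.symm
    _ ≤ 2 ^ q := h2q
end

section
/- Let g: {0,1}ⁿ → F₂ be a linear function with more than 8k relevant coordinates, and let X₁,…,X_{16k} be a uniformly random partition of [n] (each coordinate placed independently and uniformly into one of the 16k parts). Then the probability that at most 4k of the parts contain a relevant coordinate of g is at most C(16k, 4k) · 4^{−8k}, which is at most 1/12 for all k ≥ 1. -/
lemma aux_count (n m t : ℕ) (S : Finset (Fin n)) (T : Finset (Fin m)) (hT : T.card = t) :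
    (Finset.univ.filter (fun p : Fin n → Fin m => ∀ i ∈ S, p i ∈ T)).card
      = t ^ S.card * m ^ (n - S.card) := by
  classical
  have h : Finset.univ.filter (fun p : Fin n → Fin m => ∀ i ∈ S, p i ∈ T)
      = Fintype.piFinset (fun i => if i ∈ S then T else Finset.univ) := by
    ext p
    simp only [Finset.mem_filter, Finset.mem_univ, true_and, Fintype.mem_piFinset]
    constructor
    · intro h i
      split <;> simp_all
    · intro h i hi
      have := h i
      simp [hi] at this
      exact this
  rw [h, Fintype.card_piFinset]
  simp only [apply_ite Finset.card]
  rw [Finset.prod_ite]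
  simp only [Finset.prod_const]
  rw [Finset.filter_mem_eq_inter, Finset.univ_inter, hT, Finset.card_univ, Fintype.card_fin]
  congr 1
  · congr 1
    have : (Finset.filter (fun x => x ∉ S) Finset.univ) = Sᶜ := by
      ext i; simp
    rw [this, Finset.card_compl, Fintype.card_fin]
  
lemma aux_entropy (k : ℕ) : (16 * k).choose (4 * k) * 3 ^ (12 * k) ≤ 4 ^ (16 * k) := by
  have h4 : (4 : ℕ) = 3 + 1 := rfl
  rw [h4, add_pow]
  have hmem : 12 * k ∈ Finset.range (16 * k + 1) := by
    simp; omega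
  have hsymm : (16 * k).choose (12 * k) = (16 * k).choose (4 * k) := by
    rw [show 12 * k = 16 * k - 4 * k by omega]
    exact Nat.choose_symm (by omega)
  calc (16 * k).choose (4 * k) * 3 ^ (12 * k)
      = 3 ^ (12 * k) * 1 ^ (16 * k - 12 * k) * (16 * k).choose (12 * k) := by
        rw [hsymm, one_pow]; ring
    _ ≤ _ := Finset.single_le_sum (f := fun i => 3 ^ i * 1 ^ (16 * k - i) * (16 * k).choose i)
        (fun i _ => Nat.zero_le _) hmem

lemma aux_part2 (k : ℕ) (hk : 1 ≤ k) : 12 * (16 * k).choose (4 * k) ≤ 4 ^ (8 * k) := by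
  rcases Nat.lt_or_ge k 2 with h2 | h2
  · interval_cases k
    decide
  · -- k ≥ 2 : use entropy bound
    have hent := aux_entropy k
    have key : 12 * 4 ^ (8 * k) ≤ 3 ^ (12 * k) := by
      have h1 : (3 : ℕ) ^ (12 * k) = 531441 ^ k := by
        rw [show (531441 : ℕ) = 3 ^ 12 by norm_num, ← pow_mul]
      have h2' : (4 : ℕ) ^ (8 * k) = 65536 ^ k := by
        rw [show (65536 : ℕ) = 4 ^ 8 by norm_num, ← pow_mul]
      rw [h1, h2']
      calc 12 * 65536 ^ k ≤ 8 ^ k * 65536 ^ k := by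
            have : 12 ≤ 8 ^ k := le_trans (by norm_num) (Nat.pow_le_pow_right (by norm_num) h2)
            exact Nat.mul_le_mul_right _ this
        _ = (8 * 65536) ^ k := by rw [mul_pow]
        _ ≤ 531441 ^ k := Nat.pow_le_pow_left (by norm_num) k
    have : 12 * (16 * k).choose (4 * k) * 3 ^ (12 * k) ≤ 4 ^ (8 * k) * 3 ^ (12 * k) := by
      calc 12 * (16 * k).choose (4 * k) * 3 ^ (12 * k)
          = 12 * ((16 * k).choose (4 * k) * 3 ^ (12 * k)) := by ring
        _ ≤ 12 * 4 ^ (16 * k) := Nat.mul_le_mul_left _ hent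
        _ = (12 * 4 ^ (8 * k)) * 4 ^ (8 * k) := by
            rw [show 16 * k = 8 * k + 8 * k by ring, pow_add]; ring
        _ ≤ 3 ^ (12 * k) * 4 ^ (8 * k) := Nat.mul_le_mul_right _ key
        _ = 4 ^ (8 * k) * 3 ^ (12 * k) := by ring
    exact Nat.le_of_mul_le_mul_right this (by positivity)

theorem stmt16 (n k : ℕ) (hk : 1 ≤ k) (S : Finset (Fin n)) (hS : 8 * k < S.card) :
    ((Finset.univ.filter
        (fun p : Fin n → Fin (16 * k) => (S.image p).card ≤ 4 * k)).card : ℝ)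
      / (16 * k : ℝ) ^ n ≤ ((16 * k).choose (4 * k) : ℝ) / 4 ^ (8 * k) ∧
    ((16 * k).choose (4 * k) : ℝ) / 4 ^ (8 * k) ≤ 1 / 12 := by
  classical
  have hkR : (0 : ℝ) < (k : ℝ) := by exact_mod_cast hk
  have hsn : S.card ≤ n := by
    have := Finset.card_le_univ S
    simpa using this
  -- counting bound
  have hcount : (Finset.univ.filter
      (fun p : Fin n → Fin (16 * k) => (S.image p).card ≤ 4 * k)).card
      ≤ (16 * k).choose (4 * k) * ((4 * k) ^ S.card * (16 * k) ^ (n - S.card)) := by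
    have hsub : Finset.univ.filter
        (fun p : Fin n → Fin (16 * k) => (S.image p).card ≤ 4 * k)
        ⊆ (Finset.powersetCard (4 * k) (Finset.univ : Finset (Fin (16 * k)))).biUnion
            (fun T => Finset.univ.filter (fun p : Fin n → Fin (16 * k) => ∀ i ∈ S, p i ∈ T)) := by
      intro p hp
      simp only [Finset.mem_filter, Finset.mem_univ, true_and] at hp
      obtain ⟨T, hT1, -, hT3⟩ := Finset.exists_subsuperset_card_eq
        (Finset.subset_univ (S.image p)) hp
        (by rw [Finset.card_univ, Fintype.card_fin]; omega)
      simp only [Finset.mem_biUnion]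
      refine ⟨T, ?_, ?_⟩
      · rw [Finset.mem_powersetCard]; exact ⟨Finset.subset_univ T, hT3⟩
      · simp only [Finset.mem_filter, Finset.mem_univ, true_and]
        intro i hi
        exact hT1 (Finset.mem_image_of_mem p hi)
    calc (Finset.univ.filter
        (fun p : Fin n → Fin (16 * k) => (S.image p).card ≤ 4 * k)).card
        ≤ ((Finset.powersetCard (4 * k) (Finset.univ : Finset (Fin (16 * k)))).biUnion
            (fun T => Finset.univ.filter
              (fun p : Fin n → Fin (16 * k) => ∀ i ∈ S, p i ∈ T))).card :=
          Finset.card_le_card hsub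
      _ ≤ ∑ T ∈ Finset.powersetCard (4 * k) (Finset.univ : Finset (Fin (16 * k))),
            (Finset.univ.filter
              (fun p : Fin n → Fin (16 * k) => ∀ i ∈ S, p i ∈ T)).card :=
          Finset.card_biUnion_le
      _ = ∑ T ∈ Finset.powersetCard (4 * k) (Finset.univ : Finset (Fin (16 * k))),
            (4 * k) ^ S.card * (16 * k) ^ (n - S.card) := by
          refine Finset.sum_congr rfl fun T hT => ?_
          exact aux_count n (16 * k) (4 * k) S T (Finset.mem_powersetCard.mp hT).2
      _ = (16 * k).choose (4 * k) * ((4 * k) ^ S.card * (16 * k) ^ (n - S.card)) := by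
          rw [Finset.sum_const, Finset.card_powersetCard, Finset.card_univ,
            Fintype.card_fin, smul_eq_mul]
  have hne : ((16 : ℝ) * k) ^ (n - S.card) ≠ 0 := by positivity
  have key : (((4 : ℝ) * k) ^ S.card * ((16 : ℝ) * k) ^ (n - S.card)) / ((16 : ℝ) * k) ^ n
      = (1 / 4 : ℝ) ^ S.card := by
    rw [show ((16 : ℝ) * k) ^ n
        = ((16 : ℝ) * k) ^ S.card * ((16 : ℝ) * k) ^ (n - S.card) by
      rw [← pow_add, Nat.add_sub_cancel' hsn]]
    rw [mul_div_mul_right _ _ hne, ← div_pow]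
    congr 1
    rw [div_eq_div_iff (by positivity) (by norm_num)]
    ring
  constructor
  · have step1 : ((Finset.univ.filter
        (fun p : Fin n → Fin (16 * k) => (S.image p).card ≤ 4 * k)).card : ℝ)
        ≤ ((16 * k).choose (4 * k) : ℝ)
          * (((4 : ℝ) * k) ^ S.card * ((16 : ℝ) * k) ^ (n - S.card)) := by
      have := hcount
      push_cast
      exact_mod_cast Nat.cast_le.mpr this
    calc ((Finset.univ.filter
        (fun p : Fin n → Fin (16 * k) => (S.image p).card ≤ 4 * k)).card : ℝ)
          / (16 * k : ℝ) ^ n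
        ≤ (((16 * k).choose (4 * k) : ℝ)
            * (((4 : ℝ) * k) ^ S.card * ((16 : ℝ) * k) ^ (n - S.card)))
          / (16 * k : ℝ) ^ n := by gcongr
      _ = ((16 * k).choose (4 * k) : ℝ) * (1 / 4 : ℝ) ^ S.card := by
          rw [mul_div_assoc, key]
      _ ≤ ((16 * k).choose (4 * k) : ℝ) * (1 / 4 : ℝ) ^ (8 * k) := by
          apply mul_le_mul_of_nonneg_left _ (by positivity)
          exact pow_le_pow_of_le_one (by norm_num) (by norm_num) (le_of_lt hS)
      _ = ((16 * k).choose (4 * k) : ℝ) / 4 ^ (8 * k) := by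
          rw [one_div, inv_pow, div_eq_mul_inv]
  · rw [div_le_div_iff₀ (by positivity) (by norm_num)]
    have := aux_part2 k hk
    have : ((12 * (16 * k).choose (4 * k) : ℕ) : ℝ) ≤ ((4 ^ (8 * k) : ℕ) : ℝ) :=
      Nat.cast_le.mpr this
    push_cast at this
    linarith
end

section
/- Suppose B is a deterministic algorithm making nonadaptive queries a^(1),…,a^(q) ∈ {0,1}ⁿ to an unknown linear function f(x)=∑_{i∈S}x_i over F₂, accepting whenever |S| = k and rejecting whenever f ∈ C := {0, x_n, x_n+x_{n−1}, …, x_n+⋯+x_{n−k+2}}. Let M be the q × n matrix whose rows are the queries. Then the sum over F₂ of any nonempty collection of at most k−1 of the first n−k+1 columns of M is nonzero. -/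
open Matrix

theorem stmt18 (n k q : ℕ) (hk : 1 ≤ k) (hkn : k ≤ n)
    (M : Matrix (Fin q) (Fin n) (ZMod 2))
    (Acc : (Fin q → ZMod 2) → Bool)
    (hacc : ∀ S : Finset (Fin n), S.card = k →
      Acc (fun r => ∑ i ∈ S, M r i) = true)
    (hrej : ∀ ℓ : ℕ, ℓ < k →
      Acc (fun r => ∑ i ∈ Finset.univ.filter (fun i : Fin n => n - ℓ ≤ i.val),
        M r i) = false) :
    ∀ T : Finset (Fin n), T.Nonempty → T.card ≤ k - 1 →
      (∀ i ∈ T, i.val + k ≤ n) → ∑ i ∈ T, Mᵀ i ≠ 0 := by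
  intro T hTne hTcard hTlow hzero
  set ℓ := k - T.card with hℓ
  have hTc1 : 1 ≤ T.card := Finset.one_le_card.mpr hTne
  have hTck : T.card < k := lt_of_le_of_lt hTcard (Nat.sub_lt (by omega) one_pos)
  have hℓk : ℓ < k := by omega
  have hℓn : ℓ ≤ n := by omega
  set L := Finset.univ.filter (fun i : Fin n => n - ℓ ≤ i.val) with hL
  have hLcard : L.card = ℓ := by
    have hn : 0 < n := by omega
    have hlt : n - ℓ < n := by omega
    have : L = Finset.Ici (⟨n - ℓ, hlt⟩ : Fin n) := by
      ext i
      simp [hL, Finset.mem_Ici, Fin.le_def]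
    rw [this, Fin.card_Ici]
    simp
    omega
  have hdisj : Disjoint T L := by
    rw [Finset.disjoint_left]
    intro i hiT hiL
    have h1 := hTlow i hiT
    have h2 : n - ℓ ≤ i.val := by
      simp [hL] at hiL; omega
    omega
  have hScard : (T ∪ L).card = k := by
    rw [Finset.card_union_of_disjoint hdisj, hLcard]
    omega
  have hA := hacc (T ∪ L) hScard
  have hR := hrej ℓ hℓk
  have hfun : (fun r => ∑ i ∈ T ∪ L, M r i) =
      (fun r => ∑ i ∈ L, M r i) := by
    funext r
    rw [Finset.sum_union hdisj]
    have : ∑ i ∈ T, M r i = 0 := by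
      have := congrFun hzero r
      simpa [Matrix.transpose_apply] using (Finset.sum_apply r T (fun i => Mᵀ i)).symm.trans this
    rw [this, zero_add]
  rw [hfun] at hA
  rw [hA] at hR
  exact Bool.noConfusion hR
end
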